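/- arXiv:2601.20074 — 6 statements merged into one kernel-verified Lean document; each statement's English description precedes it below -/
import Mathlib

section
/- Let n ≥ 1 and let M be a matrix in Matrix (Fin n) (Fin n) ℂ. Then the trace of M is zero if and only if there exists a unitary matrix U ∈ Matrix.unitaryGroup (Fin n) ℂ such that every diagonal entry of Uᴴ * M * U is zero (equivalently, there exists an orthonormal basis of ℂⁿ in which the matrix presentation of M has all diagonal entries equal to zero). -/
/-!
The numerical range `{⟪x, T x⟫ | ‖x‖ = 1}` of an operator `T` on a complex inner product space is
convex (Toeplitz–Hausdorff). After an affine change of `T` it suffices to join the values `0` and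
`1` taken at unit vectors `x` and `y`; multiplying `x` by a suitable phase makes `⟪z, T z⟫` real
for every `z` on the real segment from `x` to `y`, and the intermediate value theorem applied to
`⟪z, T z⟫ / ‖z‖²` along that segment hits every value in `[0, 1]`.

Averaging the diagonal entries `⟪b i, T (b i)⟫` of an orthonormal basis shows that the numerical
range contains `trace T / dim E`. So if `trace T = 0` there is a unit vector `x` with
`⟪x, T x⟫ = 0`, the compression of `T` to `xᗮ` again has trace zero, and induction on the
dimension gives an orthonormal basis in which all diagonal entries of `T` vanish. For
`T = M` acting on `ℂⁿ`, the change of basis matrix from the standard basis is the unitary `U`.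
-/

open Module Matrix
open scoped InnerProductSpace ComplexConjugate

noncomputable section

theorem Complex.exists_norm_eq_one_im_mul_eq_zero (w : ℂ) : ∃ μ : ℂ, ‖μ‖ = 1 ∧ (μ * w).im = 0 := by
  refine ⟨exp (-(arg w : ℂ) * I), by simpa using norm_exp_ofReal_mul_I (-arg w), ?_⟩
  conv_lhs => rw [← norm_mul_exp_arg_mul_I w]
  rw [mul_left_comm, ← exp_add]
  simp

namespace OrthonormalBasis

variable {𝕜 E : Type*} [RCLike 𝕜] [NormedAddCommGroup E] [InnerProductSpace 𝕜 E]
  {d : ℕ} {x : E}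

theorem orthonormal_cons (hx : ‖x‖ = 1) (b : OrthonormalBasis (Fin d) 𝕜 (𝕜 ∙ x)ᗮ) :
    Orthonormal 𝕜 (Fin.cons x fun i ↦ (b i : E) : Fin (d + 1) → E) := by
  have hxb (i : Fin d) : ⟪x, b i⟫_𝕜 = 0 :=
    Submodule.mem_orthogonal_singleton_iff_inner_right.mp (b i).2
  rw [orthonormal_iff_ite]
  intro i j
  cases i using Fin.cases <;> cases j using Fin.cases
  · simp [inner_self_eq_norm_sq_to_K, hx]
  · simp [hxb, (Fin.succ_ne_zero _).symm]
  · simp [inner_eq_zero_symm.mp (hxb _), Fin.succ_ne_zero]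
  · simp [← Submodule.coe_inner, orthonormal_iff_ite.mp b.orthonormal]

def cons [FiniteDimensional 𝕜 E] (hx : ‖x‖ = 1) (b : OrthonormalBasis (Fin d) 𝕜 (𝕜 ∙ x)ᗮ) :
    OrthonormalBasis (Fin (d + 1)) 𝕜 E :=
  OrthonormalBasis.mk (orthonormal_cons hx b) <| by
    refine (LinearIndependent.span_eq_top_of_card_eq_finrank'
      (orthonormal_cons hx b).linearIndependent ?_).ge
    have hx0 : x ≠ 0 := ne_zero_of_norm_ne_zero (by simp [hx])
    rw [← (𝕜 ∙ x).finrank_add_finrank_orthogonal, finrank_span_singleton hx0,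
      finrank_eq_card_basis b.toBasis]
    simp [add_comm]

@[simp]
theorem coe_cons [FiniteDimensional 𝕜 E] (hx : ‖x‖ = 1) (b : OrthonormalBasis (Fin d) 𝕜 (𝕜 ∙ x)ᗮ) :
    ⇑(cons hx b) = Fin.cons x fun i ↦ (b i : E) :=
  OrthonormalBasis.coe_mk _ _

end OrthonormalBasis

namespace LinearMap

section Compression

variable {𝕜 E : Type*} [RCLike 𝕜] [NormedAddCommGroup E] [InnerProductSpace 𝕜 E]

def compression (T : E →ₗ[𝕜] E) (K : Submodule 𝕜 E) [K.HasOrthogonalProjection] : K →ₗ[𝕜] K :=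
  K.orthogonalProjectionOnto.toLinearMap ∘ₗ T ∘ₗ K.subtype

theorem inner_compression (T : E →ₗ[𝕜] E) (K : Submodule 𝕜 E) [K.HasOrthogonalProjection]
    (u v : K) : ⟪u, T.compression K v⟫_𝕜 = ⟪(u : E), T v⟫_𝕜 := by
  simp [compression]

theorem trace_eq_inner_add_trace_compression [FiniteDimensional 𝕜 E] (T : E →ₗ[𝕜] E) {x : E}
    (hx : ‖x‖ = 1) :
    trace 𝕜 E T = ⟪x, T x⟫_𝕜 + trace 𝕜 _ (T.compression (𝕜 ∙ x)ᗮ) := by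
  let c := stdOrthonormalBasis 𝕜 (𝕜 ∙ x)ᗮ
  rw [trace_eq_sum_inner T (c.cons hx), trace_eq_sum_inner _ c, Fin.sum_univ_succ]
  simp only [OrthonormalBasis.coe_cons, Fin.cons_zero, Fin.cons_succ, inner_compression]

end Compression

section NumericalRange

variable {E : Type*} [NormedAddCommGroup E] [InnerProductSpace ℂ E]

def numericalRange (T : E →ₗ[ℂ] E) : Set ℂ :=
  {z | ∃ x, ‖x‖ = 1 ∧ ⟪x, T x⟫_ℂ = z}

theorem inner_map_self_mem_numericalRange (T : E →ₗ[ℂ] E) {x : E} (hx : ‖x‖ = 1) :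
    ⟪x, T x⟫_ℂ ∈ T.numericalRange :=
  ⟨x, hx, rfl⟩

theorem inner_map_self_smul (T : E →ₗ[ℂ] E) (c : ℂ) (x : E) :
    ⟪c • x, T (c • x)⟫_ℂ = ‖c‖ ^ 2 * ⟪x, T x⟫_ℂ := by
  rw [map_smul, inner_smul_left, inner_smul_right, ← mul_assoc, Complex.conj_mul']

theorem inner_map_self_add (T : E →ₗ[ℂ] E) (x y : E) :
    ⟪x + y, T (x + y)⟫_ℂ = ⟪x, T x⟫_ℂ + ⟪y, T y⟫_ℂ + (⟪x, T y⟫_ℂ + ⟪y, T x⟫_ℂ) := by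
  simp only [map_add, inner_add_left, inner_add_right]
  ring

theorem inner_map_self_div_norm_sq_mem_numericalRange (T : E →ₗ[ℂ] E) {x : E} (hx : x ≠ 0) :
    ⟪x, T x⟫_ℂ / ‖x‖ ^ 2 ∈ T.numericalRange := by
  have hx' : ‖x‖ ≠ 0 := norm_ne_zero_iff.mpr hx
  convert T.inner_map_self_mem_numericalRange (x := (‖x‖⁻¹ : ℂ) • x) ?_ using 1
  · rw [inner_map_self_smul]
    simp [div_eq_inv_mul]
  · simp [norm_smul, hx']

theorem exists_inner_map_self_eq_and_im_eq_zero (T : E →ₗ[ℂ] E) (x y : E) :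
    ∃ x' : E, ‖x'‖ = ‖x‖ ∧ ⟪x', T x'⟫_ℂ = ⟪x, T x⟫_ℂ ∧ (⟪x', T y⟫_ℂ + ⟪y, T x'⟫_ℂ).im = 0 := by
  obtain ⟨μ, hμ, him⟩ := Complex.exists_norm_eq_one_im_mul_eq_zero (⟪y, T x⟫_ℂ - conj ⟪x, T y⟫_ℂ)
  refine ⟨μ • x, by simp [norm_smul, hμ], by rw [inner_map_self_smul, hμ]; simp, ?_⟩
  simp only [map_smul, inner_smul_left, inner_smul_right, Complex.add_im, Complex.mul_im,
    Complex.sub_im, Complex.sub_re, Complex.conj_re, Complex.conj_im] at him ⊢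
  linarith

theorem ofReal_mem_numericalRange_of_mem_Icc (T : E →ₗ[ℂ] E) {x y : E} (hx : ‖x‖ = 1)
    (hy : ‖y‖ = 1) (hx0 : ⟪x, T x⟫_ℂ = 0) (hy1 : ⟪y, T y⟫_ℂ = 1) {t : ℝ} (ht : t ∈ Set.Icc 0 1) :
    (t : ℂ) ∈ T.numericalRange := by
  obtain ⟨x', hx', hx'0, him⟩ := T.exists_inner_map_self_eq_and_im_eq_zero x y
  rw [hx] at hx'
  rw [hx0] at hx'0
  set ρ := (⟪x', T y⟫_ℂ + ⟪y, T x'⟫_ℂ).re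
  let z : ℝ → E := fun s ↦ ((1 - s : ℝ) : ℂ) • x' + (s : ℂ) • y
  have hqz (s : ℝ) : ⟪z s, T (z s)⟫_ℂ = ((s ^ 2 + (1 - s) * s * ρ : ℝ) : ℂ) := by
    have hcross : ⟪x', T y⟫_ℂ + ⟪y, T x'⟫_ℂ = (ρ : ℂ) := Complex.ext rfl (by simpa using him)
    simp only [z, inner_map_self_add, hx'0, hy1, map_smul, inner_smul_left, inner_smul_right,
      Complex.conj_ofReal]
    push_cast
    linear_combination (1 - (s : ℂ)) * s * hcross
  have hz (s : ℝ) : z s ≠ 0 := by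
    intro hzs
    have hsx : ((1 - s : ℝ) : ℂ) • x' = (-(s : ℂ)) • y := by
      rw [neg_smul]
      exact eq_neg_of_add_eq_zero_left hzs
    have hq := congrArg (fun v ↦ ⟪v, T v⟫_ℂ) hsx
    simp only [inner_map_self_smul, hx'0, hy1, mul_zero, mul_one, norm_neg] at hq
    have hs : s = 0 := by
      rw [eq_comm] at hq
      simpa using hq
    have hx'_zero : x' = 0 := by simpa [z, hs] using hzs
    simp [hx'_zero] at hx'
  have hcont : Continuous fun s : ℝ ↦ s ^ 2 + (1 - s) * s * ρ - t * ‖z s‖ ^ 2 := by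
    fun_prop
  obtain ⟨s, -, hs⟩ := intermediate_value_Icc zero_le_one hcont.continuousOn
    (show (0 : ℝ) ∈ Set.Icc _ _ by simp [z, hx', hy, ht.1, ht.2])
  convert T.inner_map_self_div_norm_sq_mem_numericalRange (hz s) using 1
  rw [hqz, eq_div_iff (by simpa using hz s)]
  exact_mod_cast (by linarith : t * ‖z s‖ ^ 2 = s ^ 2 + (1 - s) * s * ρ)

theorem convex_numericalRange (T : E →ₗ[ℂ] E) : Convex ℝ T.numericalRange := by
  rintro _ ⟨x, hx, rfl⟩ _ ⟨y, hy, rfl⟩ s t hs ht hst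
  set a := ⟪x, T x⟫_ℂ
  set b := ⟪y, T y⟫_ℂ
  by_cases hab : a = b
  · rw [← hab, ← add_smul, hst, one_smul]
    exact T.inner_map_self_mem_numericalRange hx
  have hba : b - a ≠ 0 := sub_ne_zero.mpr (Ne.symm hab)
  -- the affine change `S = (T - a) / (b - a)` moves `a` to `0` and `b` to `1`
  let S := (b - a)⁻¹ • (T - a • LinearMap.id)
  have hS {z : E} (hz : ‖z‖ = 1) : ⟪z, S z⟫_ℂ = (b - a)⁻¹ * (⟪z, T z⟫_ℂ - a) := by
    simp [S, inner_self_eq_norm_sq_to_K, hz]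
  obtain ⟨z, hz, hSz⟩ := S.ofReal_mem_numericalRange_of_mem_Icc hx hy (by simp [hS hx, a])
    (by rw [hS hy]; exact inv_mul_cancel₀ hba) ⟨ht, by linarith⟩
  refine ⟨z, hz, ?_⟩
  rw [hS hz, inv_mul_eq_iff_eq_mul₀ hba] at hSz
  have hst' : (s : ℂ) + t = 1 := by exact_mod_cast hst
  rw [Complex.real_smul, Complex.real_smul]
  linear_combination hSz - a * hst'

theorem inv_finrank_mul_trace_mem_numericalRange [FiniteDimensional ℂ E] [Nontrivial E]
    (T : E →ₗ[ℂ] E) : (finrank ℂ E : ℂ)⁻¹ * trace ℂ E T ∈ T.numericalRange := by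
  let b := stdOrthonormalBasis ℂ E
  have hn : (finrank ℂ E : ℝ) ≠ 0 := by exact_mod_cast finrank_pos.ne'
  convert T.convex_numericalRange.sum_mem (t := Finset.univ)
    (w := fun _ ↦ (finrank ℂ E : ℝ)⁻¹) (fun _ _ ↦ by positivity)
    (by simp [hn]) fun i _ ↦ T.inner_map_self_mem_numericalRange (b.norm_eq_one i) using 1
  rw [trace_eq_sum_inner T b, Finset.mul_sum]
  simp [Complex.real_smul]

theorem exists_orthonormalBasis_inner_map_self_eq_zero [FiniteDimensional ℂ E] {d : ℕ}
    (hd : finrank ℂ E = d) (T : E →ₗ[ℂ] E) (hT : trace ℂ E T = 0) :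
    ∃ b : OrthonormalBasis (Fin d) ℂ E, ∀ i, ⟪b i, T (b i)⟫_ℂ = 0 := by
  induction d generalizing E with
  | zero => exact ⟨(stdOrthonormalBasis ℂ E).reindex (finCongr hd), fun i ↦ i.elim0⟩
  | succ d ih =>
    have := Module.nontrivial_of_finrank_eq_succ hd
    obtain ⟨x, hx, hx0⟩ : (0 : ℂ) ∈ T.numericalRange := by
      simpa [hT] using T.inv_finrank_mul_trace_mem_numericalRange
    have hK : finrank ℂ (ℂ ∙ x)ᗮ = d := by
      have := (ℂ ∙ x).finrank_add_finrank_orthogonal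
      rw [finrank_span_singleton (ne_zero_of_norm_ne_zero (by simp [hx])), hd] at this
      omega
    have hTK : trace ℂ _ (T.compression (ℂ ∙ x)ᗮ) = 0 := by
      have := T.trace_eq_inner_add_trace_compression hx
      rw [hT, hx0, zero_add] at this
      exact this.symm
    obtain ⟨b, hb⟩ := ih hK _ hTK
    refine ⟨b.cons hx, Fin.cases ?_ fun i ↦ ?_⟩
    · simpa using hx0
    · rw [OrthonormalBasis.coe_cons, Fin.cons_succ, ← inner_compression]
      exact hb i

end NumericalRange

end LinearMap

namespace Matrix

variable {ι : Type*} [Fintype ι] [DecidableEq ι]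

theorem trace_toLpLin {R : Type*} [CommRing R] (p : ENNReal) (M : Matrix ι ι R) :
    LinearMap.trace R _ (toLpLin p p M) = M.trace := by
  rw [toLpLin_eq_toLin, LinearMap.trace_eq_matrix_trace R (PiLp.basisFun p R ι),
    LinearMap.toMatrix_toLin]

theorem trace_conjTranspose_mul_mul_of_mem_unitaryGroup {α : Type*} [CommRing α] [StarRing α]
    (M : Matrix ι ι α) {U : Matrix ι ι α} (hU : U ∈ unitaryGroup ι α) :
    (Uᴴ * M * U).trace = M.trace := by
  rw [trace_mul_comm, ← Matrix.mul_assoc, ← star_eq_conjTranspose, mem_unitaryGroup_iff.mp hU,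
    Matrix.one_mul]

theorem conjTranspose_toMatrix_mul_mul_toMatrix_apply {𝕜 : Type*} [RCLike 𝕜] (M : Matrix ι ι 𝕜)
    (b : OrthonormalBasis ι 𝕜 (EuclideanSpace 𝕜 ι)) (i j : ι) :
    (((EuclideanSpace.basisFun ι 𝕜).toBasis.toMatrix b)ᴴ * M *
      (EuclideanSpace.basisFun ι 𝕜).toBasis.toMatrix b) i j = ⟪b i, toLpLin 2 2 M (b j)⟫_𝕜 := by
  simp only [mul_apply, conjTranspose_apply, Basis.toMatrix_apply,
    OrthonormalBasis.coe_toBasis_repr_apply, EuclideanSpace.basisFun_repr, RCLike.star_def,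
    mul_comm, Finset.mul_sum, mul_left_comm, PiLp.inner_apply, ofLp_toLpLin, toLin'_apply, mulVec,
    dotProduct, RCLike.inner_apply, mul_assoc]
  rw [Finset.sum_comm]

theorem exists_mem_unitaryGroup_diag_conjTranspose_mul_mul_eq_zero (M : Matrix ι ι ℂ)
    (hM : M.trace = 0) : ∃ U ∈ unitaryGroup ι ℂ, ∀ i, (Uᴴ * M * U) i i = 0 := by
  obtain ⟨b, hb⟩ := LinearMap.exists_orthonormalBasis_inner_map_self_eq_zero
    (E := EuclideanSpace ℂ ι) finrank_euclideanSpace (toLpLin 2 2 M) (by rwa [trace_toLpLin])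
  let b' := b.reindex (Fintype.equivFin ι).symm
  refine ⟨_, (EuclideanSpace.basisFun ι ℂ).toMatrix_orthonormalBasis_mem_unitary b', fun i ↦ ?_⟩
  rw [conjTranspose_toMatrix_mul_mul_toMatrix_apply, OrthonormalBasis.reindex_apply]
  exact hb _

end Matrix

end

theorem trace_zero_iff_exists_unitary_zero_diag_general (n : ℕ)
    (M : Matrix (Fin n) (Fin n) ℂ) :
    M.trace = 0 ↔
      ∃ U : Matrix (Fin n) (Fin n) ℂ, U ∈ Matrix.unitaryGroup (Fin n) ℂ ∧
        ∀ i : Fin n, (Uᴴ * M * U) i i = 0 := by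
  refine ⟨M.exists_mem_unitaryGroup_diag_conjTranspose_mul_mul_eq_zero, ?_⟩
  rintro ⟨U, hU, hdiag⟩
  rw [← M.trace_conjTranspose_mul_mul_of_mem_unitaryGroup hU]
  exact Finset.sum_eq_zero fun i _ ↦ hdiag i

/-- Finite-dimensional case of Fan's lemma: an `n × n` complex matrix has trace zero
if and only if it is unitarily conjugate to a matrix with all diagonal entries zero. -/
theorem trace_zero_iff_exists_unitary_zero_diag (n : ℕ) (hn : 1 ≤ n)
    (M : Matrix (Fin n) (Fin n) ℂ) :
    M.trace = 0 ↔
      ∃ U : Matrix (Fin n) (Fin n) ℂ, U ∈ Matrix.unitaryGroup (Fin n) ℂ ∧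
        ∀ i : Fin n, (Uᴴ * M * U) i i = 0 :=
  trace_zero_iff_exists_unitary_zero_diag_general n M
end

section
/- Let n ≥ 1 and let M be a matrix in Matrix (Fin n) (Fin n) ℂ with trace zero. Then there exists a unit vector v : EuclideanSpace ℂ (Fin n), ‖v‖ = 1, such that ⟪v, M.mulVec v⟫ = 0, i.e., ∑ i, conj (v i) * (M.mulVec v) i = 0. -/
open Matrix

local notation "⟪" x ", " y "⟫" => @inner ℂ _ _ x y

/-!
Toeplitz–Hausdorff: the numerical range `{⟪x, T x⟫ : ‖x‖ = 1}` of a complex linear operator is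
convex. After an affine change `T ↦ α • T + β • 1` it suffices to fill the segment between the
values `1 = ⟪x, T x⟫` and `0 = ⟪y, T y⟫`. Rotating `y` by a phase makes the cross term
`⟪x, T y⟫ + ⟪y, T x⟫` real, so `⟪z, T z⟫` is real along the segment `z = (1 - s) x + s y`, and the
intermediate value theorem finds every ratio `⟪z, T z⟫ / ‖z‖² ∈ [0, 1]`.

The diagonal entries `M i i = ⟪eᵢ, M eᵢ⟫` lie in the numerical range of `M`, hence so does their
mean `trace M / n = 0`.
-/

open Set ComplexConjugate

section RCLike

variable {𝕜 E : Type*} [RCLike 𝕜] [NormedAddCommGroup E] [InnerProductSpace 𝕜 E]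

def numericalRange (T : E →ₗ[𝕜] E) : Set 𝕜 :=
  {z | ∃ x : E, ‖x‖ = 1 ∧ inner 𝕜 x (T x) = z}

lemma mem_numericalRange_of_inner_eq {T : E →ₗ[𝕜] E} {x : E} {z : 𝕜} (hx : x ≠ 0)
    (h : inner 𝕜 x (T x) = z * ‖x‖ ^ 2) : z ∈ numericalRange T := by
  have hx' : (‖x‖ : 𝕜) ≠ 0 := RCLike.ofReal_ne_zero.2 (norm_ne_zero_iff.2 hx)
  refine ⟨(‖x‖⁻¹ : 𝕜) • x, ?_, ?_⟩
  · rw [norm_smul, norm_inv, RCLike.norm_ofReal, abs_norm,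
      inv_mul_cancel₀ (norm_ne_zero_iff.2 hx)]
  · rw [map_smul, inner_smul_left, inner_smul_right, h, map_inv₀, RCLike.conj_ofReal]
    field_simp

lemma smul_add_mem_numericalRange {T : E →ₗ[𝕜] E} {z : 𝕜} (hz : z ∈ numericalRange T)
    (a b : 𝕜) : a * z + b ∈ numericalRange (a • T + b • 1) := by
  obtain ⟨x, hx, rfl⟩ := hz
  refine ⟨x, hx, ?_⟩
  simp [inner_add_right, inner_smul_right, inner_self_eq_norm_sq_to_K, hx]

lemma inner_map_smul_add_smul (T : E →ₗ[𝕜] E) (a b : 𝕜) (x y : E) :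
    inner 𝕜 (a • x + b • y) (T (a • x + b • y)) =
      conj a * a * inner 𝕜 x (T x) + conj a * b * inner 𝕜 x (T y) +
        conj b * a * inner 𝕜 y (T x) + conj b * b * inner 𝕜 y (T y) := by
  simp only [map_add, map_smul, inner_add_left, inner_add_right, inner_smul_left,
    inner_smul_right]
  ring

end RCLike

lemma Complex.exists_norm_eq_one_mul_add_conj_mul_eq_ofReal (u w : ℂ) :
    ∃ c : ℂ, ‖c‖ = 1 ∧ ∃ r : ℝ, c * u + conj c * w = r := by
  -- make `c * (u - conj w)` real; the rest, `c * conj w + conj (c * conj w)`, is real anyway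
  obtain ⟨c, hc, hcd⟩ := Complex.exists_norm_eq_mul_self (u - conj w)
  refine ⟨c, hc, _, (Complex.conj_eq_iff_re.1 ?_).symm⟩
  have hcd' := congrArg conj hcd
  simp only [Complex.conj_ofReal, map_mul, map_sub, Complex.conj_conj] at hcd'
  simp only [map_add, map_mul, Complex.conj_conj]
  linear_combination hcd - hcd'

section Complex

variable {E : Type*} [NormedAddCommGroup E] [InnerProductSpace ℂ E]

lemma exists_rotation_inner_map_add_inner_map_eq_ofReal {T : E →ₗ[ℂ] E} (x : E) {y : E}
    (hy : ‖y‖ = 1) (hTy : ⟪y, T y⟫ = 0) :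
    ∃ y' : E, ‖y'‖ = 1 ∧ ⟪y', T y'⟫ = 0 ∧ ∃ r : ℝ, ⟪x, T y'⟫ + ⟪y', T x⟫ = r := by
  obtain ⟨c, hc, r, hr⟩ :=
    Complex.exists_norm_eq_one_mul_add_conj_mul_eq_ofReal ⟪x, T y⟫ ⟪y, T x⟫
  refine ⟨c • y, by rw [norm_smul, hc, hy, one_mul], ?_, r, ?_⟩
  · rw [map_smul, inner_smul_left, inner_smul_right, hTy, mul_zero, mul_zero]
  · rw [map_smul, inner_smul_left, inner_smul_right, hr]

lemma one_sub_smul_add_smul_ne_zero_of_inner_map_ne {T : E →ₗ[ℂ] E} {x y : E} (hx : ‖x‖ = 1)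
    (hy : ‖y‖ = 1) (hxy : ⟪x, T x⟫ ≠ ⟪y, T y⟫) {s : ℝ} (hs : s ∈ Icc 0 1) :
    ((1 - s : ℝ) : ℂ) • x + (s : ℂ) • y ≠ 0 := by
  intro h
  have hnorm : ‖((1 - s : ℝ) : ℂ) • x‖ = ‖(s : ℂ) • y‖ := by
    rw [add_eq_zero_iff_eq_neg.1 h, norm_neg]
  rw [norm_smul, norm_smul, hx, hy, Complex.norm_real, Complex.norm_real, Real.norm_eq_abs,
    Real.norm_eq_abs, abs_of_nonneg (sub_nonneg.2 hs.2), abs_of_nonneg hs.1] at hnorm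
  obtain rfl : s = 1 / 2 := by linarith
  have hsum : x + y = 0 := by
    rw [show (1 - 1 / 2 : ℝ) = 1 / 2 by norm_num, ← smul_add, smul_eq_zero] at h
    exact h.resolve_left (by norm_num)
  apply hxy
  simp [eq_neg_of_add_eq_zero_left hsum]

lemma ofReal_mem_numericalRange_of_zero_mem_of_one_mem {T : E →ₗ[ℂ] E}
    (h₀ : 0 ∈ numericalRange T) (h₁ : 1 ∈ numericalRange T) {t : ℝ} (ht : t ∈ Icc 0 1) :
    (t : ℂ) ∈ numericalRange T := by
  obtain ⟨x, hx, hTx⟩ := h₁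
  obtain ⟨y₀, hy₀, hTy₀⟩ := h₀
  obtain ⟨y, hy, hTy, r, hr⟩ := exists_rotation_inner_map_add_inner_map_eq_ofReal x hy₀ hTy₀
  set z : ℝ → E := fun s ↦ ((1 - s : ℝ) : ℂ) • x + (s : ℂ) • y
  have hz_inner (s : ℝ) : ⟪z s, T (z s)⟫ = ((1 - s) ^ 2 + (1 - s) * s * r : ℝ) := by
    simp only [z, inner_map_smul_add_smul, hTx, hTy, Complex.conj_ofReal]
    push_cast
    linear_combination (1 - (s : ℂ)) * s * hr
  obtain ⟨s, hs, hs_eq⟩ : ∃ s ∈ Icc (0 : ℝ) 1,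
      (1 - s) ^ 2 + (1 - s) * s * r - t * ‖z s‖ ^ 2 = 0 := by
    refine intermediate_value_Icc' zero_le_one (Continuous.continuousOn (by fun_prop)) ⟨?_, ?_⟩
      <;> simp [z, hx, hy] <;> linarith [ht.1, ht.2]
  refine mem_numericalRange_of_inner_eq (x := z s)
    (one_sub_smul_add_smul_ne_zero_of_inner_map_ne hx hy (by rw [hTx, hTy]; exact one_ne_zero)
      hs) ?_
  rw [hz_inner, sub_eq_zero.1 hs_eq, RCLike.ofReal_eq_complex_ofReal]
  push_cast
  ring

theorem convex_numericalRange (T : E →ₗ[ℂ] E) : Convex ℝ (numericalRange T) := by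
  intro a ha b hb α β hα _ hαβ
  obtain rfl : β = 1 - α := by linarith
  obtain rfl | hab := eq_or_ne a b
  · rwa [← add_smul, add_sub_cancel, one_smul]
  have hab' : a - b ≠ 0 := sub_ne_zero.2 hab
  set U : E →ₗ[ℂ] E := (a - b)⁻¹ • T + (-(a - b)⁻¹ * b) • 1
  have h₁ : 1 ∈ numericalRange U := by
    convert smul_add_mem_numericalRange ha (a - b)⁻¹ (-(a - b)⁻¹ * b) using 1
    field_simp
    ring
  have h₀ : 0 ∈ numericalRange U := by
    convert smul_add_mem_numericalRange hb (a - b)⁻¹ (-(a - b)⁻¹ * b) using 1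
    ring
  have hT : (a - b) • U + b • 1 = T := by
    ext v
    simp [U, smul_smul, ← mul_assoc, mul_inv_cancel₀ hab']
  have hα_mem := smul_add_mem_numericalRange
    (ofReal_mem_numericalRange_of_zero_mem_of_one_mem h₀ h₁ ⟨hα, by linarith⟩) (a - b) b
  rw [hT] at hα_mem
  convert hα_mem using 1
  rw [Complex.real_smul, Complex.real_smul]
  push_cast
  ring

end Complex

lemma Matrix.diag_mem_numericalRange_toEuclideanLin {𝕜 ι : Type*} [RCLike 𝕜] [Fintype ι]
    [DecidableEq ι] (M : Matrix ι ι 𝕜) (i : ι) : M i i ∈ numericalRange (toEuclideanLin M) :=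
  ⟨EuclideanSpace.single i 1, by simp, by simp [EuclideanSpace.inner_single_left]⟩

/-- For a trace-zero complex matrix, `0` lies in its numerical range: there is a unit
vector `v` with `⟪v, M v⟫ = 0`. -/
theorem exists_unit_vector_inner_mulVec_eq_zero (n : ℕ) (hn : 1 ≤ n)
    (M : Matrix (Fin n) (Fin n) ℂ) (hM : M.trace = 0) :
    ∃ v : EuclideanSpace ℂ (Fin n), ‖v‖ = 1 ∧
      ⟪v, (WithLp.toLp 2 (M.mulVec v) : EuclideanSpace ℂ (Fin n))⟫ = 0 := by
  have hn' : (n : ℝ) ≠ 0 := Nat.cast_ne_zero.2 (by omega)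
  have hmean : ∑ i, (n : ℝ)⁻¹ • M i i ∈ numericalRange (toEuclideanLin M) :=
    (convex_numericalRange _).sum_mem (fun _ _ ↦ by positivity)
      (by rw [Finset.sum_const, Finset.card_univ, Fintype.card_fin, nsmul_eq_mul,
        mul_inv_cancel₀ hn'])
      (fun i _ ↦ M.diag_mem_numericalRange_toEuclideanLin i)
  rw [← Finset.smul_sum] at hmean
  change (n : ℝ)⁻¹ • M.trace ∈ numericalRange (toEuclideanLin M) at hmean
  rwa [hM, smul_zero] at hmean
end

section
/- Let dA, dB ≥ 1, let ψ, φ : EuclideanSpace ℂ (Fin dA × Fin dB), and define the matrices M_ψ, M_φ : Matrix (Fin dB) (Fin dA) ℂ by M_ψ j a = ψ (a, j) and M_φ j a = φ (a, j). Let U ∈ Matrix.unitaryGroup (Fin dA) ℂ be such that every diagonal entry of U * (M_φᴴ * M_ψ) * Uᴴ is zero. For each i : Fin dA let w_i : EuclideanSpace ℂ (Fin dA) be the i-th row of U, w_i a = U i a. Then (w_i)_{i : Fin dA} is an orthonormal basis of EuclideanSpace ℂ (Fin dA), and for every i the conditional states satisfy ⟪φ^{|w_i}, ψ^{|w_i}⟫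 = 0. -/
/-!
Writing `v` for a vector on the first subsystem, `ψ^{|v} = Mψ (conj v)`, so
`⟪φ^{|v}, ψ^{|v}⟫ = vᵀ (Mφᴴ Mψ) conj v`; for `v` the `i`-th row of `U` this is the `i`-th
diagonal entry of `U (Mφᴴ Mψ) Uᴴ`, which vanishes by hypothesis. The rows of a unitary matrix
are orthonormal, and `dA` orthonormal vectors in `ℂ^dA` form an orthonormal basis.
-/

open Matrix

local notation "⟪" x ", " y "⟫" => @inner ℂ _ _ x y

/-- The conditional state of a bipartite vector `ψ` relative to a vector `v` on the
first subsystem: `(condState ψ v) j = ∑ a, conj (v a) * ψ (a, j)`. -/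
noncomputable def condState {dA dB : ℕ} (ψ : EuclideanSpace ℂ (Fin dA × Fin dB))
    (v : EuclideanSpace ℂ (Fin dA)) : EuclideanSpace ℂ (Fin dB) :=
  WithLp.toLp 2 (fun j => ∑ a : Fin dA, (starRingEnd ℂ) (v a) * ψ (a, j))

namespace Matrix

variable {n 𝕜 : Type*} [Fintype n] [RCLike 𝕜]

theorem orthonormal_toLp_rows_of_mem_unitaryGroup [DecidableEq n] {U : Matrix n n 𝕜}
    (hU : U ∈ unitaryGroup n 𝕜) : Orthonormal 𝕜 fun i => WithLp.toLp 2 (U i) := by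
  rw [orthonormal_iff_ite]
  intro i k
  calc U k ⬝ᵥ star (U i) = (U * star U) k i := by rw [mul_apply']; rfl
    _ = if i = k then 1 else 0 := by simp [mem_unitaryGroup_iff.mp hU, one_apply, eq_comm]

theorem mul_mul_conjTranspose_apply_self {α : Type*} [NonUnitalSemiring α] [Star α]
    (U A : Matrix n n α) (i : n) :
    (U * A * Uᴴ) i i = U i ⬝ᵥ A *ᵥ star (U i) :=
  mul_mul_apply U A Uᴴ i i

end Matrix

theorem condState_eq_toLp_mulVec {dA dB : ℕ} {ψ : EuclideanSpace ℂ (Fin dA × Fin dB)}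
    {M : Matrix (Fin dB) (Fin dA) ℂ} (hM : ∀ j a, M j a = ψ (a, j))
    (v : EuclideanSpace ℂ (Fin dA)) :
    condState ψ v = WithLp.toLp 2 (M *ᵥ star (WithLp.ofLp v)) := by
  ext j
  simp only [condState, mulVec, dotProduct, hM, mul_comm]
  rfl

theorem inner_condState_condState {dA dB : ℕ} {ψ φ : EuclideanSpace ℂ (Fin dA × Fin dB)}
    {Mψ Mφ : Matrix (Fin dB) (Fin dA) ℂ} (hMψ : ∀ j a, Mψ j a = ψ (a, j))
    (hMφ : ∀ j a, Mφ j a = φ (a, j)) (v : EuclideanSpace ℂ (Fin dA)) :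
    ⟪condState φ v, condState ψ v⟫ = WithLp.ofLp v ⬝ᵥ (Mφᴴ * Mψ) *ᵥ star (WithLp.ofLp v) := by
  rw [condState_eq_toLp_mulVec hMψ, condState_eq_toLp_mulVec hMφ,
    EuclideanSpace.inner_toLp_toLp, star_mulVec, star_star, dotProduct_comm,
    ← dotProduct_mulVec, mulVec_mulVec]

theorem rows_of_flattening_unitary_give_orthogonal_condStates_general
    (dA dB : ℕ)
    (ψ φ : EuclideanSpace ℂ (Fin dA × Fin dB))
    (Mψ Mφ : Matrix (Fin dB) (Fin dA) ℂ)
    (hMψ : ∀ (j : Fin dB) (a : Fin dA), Mψ j a = ψ (a, j))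
    (hMφ : ∀ (j : Fin dB) (a : Fin dA), Mφ j a = φ (a, j))
    (U : Matrix (Fin dA) (Fin dA) ℂ) (hU : U ∈ Matrix.unitaryGroup (Fin dA) ℂ)
    (hdiag : ∀ i : Fin dA, (U * (Mφᴴ * Mψ) * Uᴴ) i i = 0)
    (w : Fin dA → EuclideanSpace ℂ (Fin dA))
    (hw : ∀ (i : Fin dA) (a : Fin dA), w i a = U i a) :
    (∃ b : OrthonormalBasis (Fin dA) ℂ (EuclideanSpace ℂ (Fin dA)), ⇑b = w) ∧
    ∀ i : Fin dA, ⟪condState φ (w i), condState ψ (w i)⟫ = 0 := by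
  obtain rfl : w = fun i => WithLp.toLp 2 (U i) := funext fun i => PiLp.ext (hw i)
  have hon := orthonormal_toLp_rows_of_mem_unitaryGroup hU
  have hspan := hon.linearIndependent.span_eq_top_of_card_eq_finrank' (by simp)
  refine ⟨⟨OrthonormalBasis.mk hon hspan.ge, OrthonormalBasis.coe_mk _ _⟩, fun i => ?_⟩
  rw [inner_condState_condState hMψ hMφ, ← hdiag i, mul_mul_conjTranspose_apply_self]

/-- Reduction of finding Alice's measurement to flattening the overlap matrix: if `U` is
a unitary such that `U * (Mφᴴ * Mψ) * Uᴴ` has zero diagonal, then the rows of `U` form an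
orthonormal basis of `ℂ^dA` in which all pairs of conditional states are orthogonal. -/
theorem rows_of_flattening_unitary_give_orthogonal_condStates
    (dA dB : ℕ) (hdA : 1 ≤ dA) (hdB : 1 ≤ dB)
    (ψ φ : EuclideanSpace ℂ (Fin dA × Fin dB))
    (Mψ Mφ : Matrix (Fin dB) (Fin dA) ℂ)
    (hMψ : ∀ (j : Fin dB) (a : Fin dA), Mψ j a = ψ (a, j))
    (hMφ : ∀ (j : Fin dB) (a : Fin dA), Mφ j a = φ (a, j))
    (U : Matrix (Fin dA) (Fin dA) ℂ) (hU : U ∈ Matrix.unitaryGroup (Fin dA) ℂ)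
    (hdiag : ∀ i : Fin dA, (U * (Mφᴴ * Mψ) * Uᴴ) i i = 0)
    (w : Fin dA → EuclideanSpace ℂ (Fin dA))
    (hw : ∀ (i : Fin dA) (a : Fin dA), w i a = U i a) :
    (∃ b : OrthonormalBasis (Fin dA) ℂ (EuclideanSpace ℂ (Fin dA)), ⇑b = w) ∧
    ∀ i : Fin dA, ⟪condState φ (w i), condState ψ (w i)⟫ = 0 :=
  rows_of_flattening_unitary_give_orthogonal_condStates_general dA dB ψ φ Mψ Mφ hMψ hMφ U hU hdiag w
    hw
end

section
/- Let M ∈ Matrix (Fin 2) (Fin 2) ℂ have trace zero, let λ ∈ ℂ with λ ≠ 0, and let w₀, w₁ : EuclideanSpace ℂ (Fin 2) be unit vectors with M.mulVec w₀ = λ • w₀ and M.mulVec w₁ = (−λ) • w₁. Let θ ∈ ℝ satisfy ⟪w₁, w₀⟫ = Complex.exp (θ * Complex.I) * |⟪w₁, w₀⟫|. Define x₊ := Complex.exp (−θ * Complex.I) • w₀ + w₁ and x₋ := Complex.exp (−θ * Complex.I) • w₀ − w₁. Then x₊ ≠ 0, x₋ ≠ 0, ⟪x₊, x₋⟫ =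 0, ⟪x₊, M.mulVec x₊⟫ = 0, and ⟪x₋, M.mulVec x₋⟫ = 0. -/
open Matrix

local notation "⟪" x ", " y "⟫" => @inner ℂ _ _ x y

/-! Put `u = e^{-iθ} w₀`. Then `‖u‖ = ‖w₁‖` and `⟪w₁, u⟫ = |⟪w₁, w₀⟫|` is real, which makes
`x₊ = u + w₁` and `x₋ = u - w₁` orthogonal. Since `u` and `w₁` are eigenvectors for `λ` and `-λ`,
`M` swaps them up to the factor `λ`: `M x₊ = λ x₋` and `M x₋ = λ x₊`, so `⟪x±, M x±⟫ = λ ⟪x±, x∓⟫ = 0`.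
Finally `x±` are nonzero because eigenvectors for the distinct eigenvalues `λ ≠ -λ` are
linearly independent. -/

section Eigenvectors

variable {R V : Type*} [Ring R] [AddCommGroup V] [Module R V] (f : V →ₗ[R] V) {μ : R} {u v : V}

theorem apply_add_eq_smul_sub (hu : f u = μ • u) (hv : f v = (-μ) • v) :
    f (u + v) = μ • (u - v) := by
  rw [map_add, hu, hv, smul_sub, neg_smul, sub_eq_add_neg]

theorem apply_sub_eq_smul_add (hu : f u = μ • u) (hv : f v = (-μ) • v) :
    f (u - v) = μ • (u + v) := by
  rw [map_sub, hu, hv, smul_add, neg_smul, sub_neg_eq_add]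

end Eigenvectors

theorem smul_add_ne_zero_of_apply_eq_smul {K V : Type*} [Field K] [AddCommGroup V] [Module K V]
    (f : V →ₗ[K] V) {μ ν : K} {u v : V} (hμν : μ ≠ ν) (hu : f u = μ • u) (hv : f v = ν • v)
    (hv0 : v ≠ 0) (c : K) : c • u + v ≠ 0 := by
  intro h
  obtain rfl : v = -(c • u) := eq_neg_of_add_eq_zero_right h
  have : (μ - ν) • -(c • u) = 0 := by
    rw [sub_smul, ← hv, map_neg, map_smul, hu, smul_comm, smul_neg, sub_self]
  exact hv0 ((smul_eq_zero.mp this).resolve_left (sub_ne_zero.mpr hμν))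

theorem inner_add_sub_eq_zero_of_norm_eq {𝕜 E : Type*} [RCLike 𝕜] [NormedAddCommGroup E]
    [InnerProductSpace 𝕜 E] {a b : E} (hn : ‖a‖ = ‖b‖) (h : inner 𝕜 a b = inner 𝕜 b a) :
    inner 𝕜 (a + b) (a - b) = 0 := by
  rw [inner_add_left, inner_sub_right, inner_sub_right, inner_self_eq_norm_sq_to_K,
    inner_self_eq_norm_sq_to_K, hn, h]
  ring

theorem flattening_eigenvector_combination_general
    (M : Matrix (Fin 2) (Fin 2) ℂ)
    (lam : ℂ) (hlam : lam ≠ 0)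
    (w₀ w₁ : EuclideanSpace ℂ (Fin 2)) (hw₀ : ‖w₀‖ = 1) (hw₁ : ‖w₁‖ = 1)
    (heig₀ : M.mulVec w₀ = lam • (w₀ : Fin 2 → ℂ))
    (heig₁ : M.mulVec w₁ = (-lam) • (w₁ : Fin 2 → ℂ))
    (θ : ℝ)
    (hθ : ⟪w₁, w₀⟫ = Complex.exp ((θ : ℂ) * Complex.I) * ((‖⟪w₁, w₀⟫‖ : ℝ) : ℂ))
    (xp xm : EuclideanSpace ℂ (Fin 2))
    (hxp : xp = Complex.exp ((-θ : ℂ) * Complex.I) • w₀ + w₁)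
    (hxm : xm = Complex.exp ((-θ : ℂ) * Complex.I) • w₀ - w₁) :
    xp ≠ 0 ∧ xm ≠ 0 ∧ ⟪xp, xm⟫ = 0 ∧
      ⟪xp, (WithLp.toLp 2 (M.mulVec xp) : EuclideanSpace ℂ (Fin 2))⟫ = 0 ∧
      ⟪xm, (WithLp.toLp 2 (M.mulVec xm) : EuclideanSpace ℂ (Fin 2))⟫ = 0 := by
  set c := Complex.exp ((-θ : ℂ) * Complex.I)
  set f := Matrix.toLpLin 2 2 M
  have hc : ‖c‖ = 1 := by simp [c, Complex.norm_exp]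
  have hf₀ : f w₀ = lam • w₀ := congrArg (WithLp.toLp 2) heig₀
  have hf₁ : f w₁ = (-lam) • w₁ := congrArg (WithLp.toLp 2) heig₁
  have hfu : f (c • w₀) = lam • c • w₀ := by rw [map_smul, hf₀, smul_comm]
  have hw₁0 : w₁ ≠ 0 := by rintro rfl; simp at hw₁
  have hlam' : lam ≠ -lam := fun h => hlam (CharZero.eq_neg_self_iff.mp h)
  have hreal : ⟪w₁, c • w₀⟫ = (‖⟪w₁, w₀⟫‖ : ℂ) := by
    rw [inner_smul_right, hθ, ← mul_assoc, ← Complex.exp_add]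
    simp
  have horth : ⟪xp, xm⟫ = 0 := by
    rw [hxp, hxm]
    refine inner_add_sub_eq_zero_of_norm_eq (by rw [norm_smul, hc, hw₀, hw₁, one_mul]) ?_
    rw [← inner_conj_symm, hreal, Complex.conj_ofReal]
  have hfxp : f xp = lam • xm := hxp ▸ hxm ▸ apply_add_eq_smul_sub f hfu hf₁
  have hfxm : f xm = lam • xp := hxp ▸ hxm ▸ apply_sub_eq_smul_add f hfu hf₁
  refine ⟨hxp ▸ smul_add_ne_zero_of_apply_eq_smul f hlam' hf₀ hf₁ hw₁0 c, ?_, horth, ?_, ?_⟩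
  · rw [hxm, sub_eq_add_neg]
    exact smul_add_ne_zero_of_apply_eq_smul f hlam' hf₀ (by rw [map_neg, hf₁, smul_neg])
      (neg_ne_zero.mpr hw₁0) c
  · change ⟪xp, f xp⟫ = 0
    rw [hfxp, inner_smul_right, horth, mul_zero]
  · change ⟪xm, f xm⟫ = 0
    rw [hfxm, inner_smul_right, inner_eq_zero_symm.mp horth, mul_zero]

/-- Core computation of the 2×2 flattening algorithm: for a traceless 2×2 matrix with
nonzero eigenvalue `λ` and unit eigenvectors `w₀, w₁` (for eigenvalues `λ, -λ`), the
vectors `xp = e^{-iθ} w₀ + w₁` and `xm = e^{-iθ} w₀ - w₁` (with `θ` the phase of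
`⟪w₁, w₀⟫`) are nonzero, mutually orthogonal, and both have vanishing numerical value
`⟪x, M x⟫ = 0`. -/
theorem flattening_eigenvector_combination
    (M : Matrix (Fin 2) (Fin 2) ℂ) (hM : M.trace = 0)
    (lam : ℂ) (hlam : lam ≠ 0)
    (w₀ w₁ : EuclideanSpace ℂ (Fin 2)) (hw₀ : ‖w₀‖ = 1) (hw₁ : ‖w₁‖ = 1)
    (heig₀ : M.mulVec w₀ = lam • (w₀ : Fin 2 → ℂ))
    (heig₁ : M.mulVec w₁ = (-lam) • (w₁ : Fin 2 → ℂ))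
    (θ : ℝ)
    (hθ : ⟪w₁, w₀⟫ = Complex.exp ((θ : ℂ) * Complex.I) * ((‖⟪w₁, w₀⟫‖ : ℝ) : ℂ))
    (xp xm : EuclideanSpace ℂ (Fin 2))
    (hxp : xp = Complex.exp ((-θ : ℂ) * Complex.I) • w₀ + w₁)
    (hxm : xm = Complex.exp ((-θ : ℂ) * Complex.I) • w₀ - w₁) :
    xp ≠ 0 ∧ xm ≠ 0 ∧ ⟪xp, xm⟫ = 0 ∧
      ⟪xp, (WithLp.toLp 2 (M.mulVec xp) : EuclideanSpace ℂ (Fin 2))⟫ = 0 ∧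
      ⟪xm, (WithLp.toLp 2 (M.mulVec xm) : EuclideanSpace ℂ (Fin 2))⟫ = 0 :=
  flattening_eigenvector_combination_general M lam hlam w₀ w₁ hw₀ hw₁ heig₀ heig₁ θ hθ xp xm hxp hxm
end

section
/- Let d ≥ 1 and let M ∈ Matrix (Fin d) (Fin d) ℂ. Then there exists a unitary matrix U ∈ Matrix.unitaryGroup (Fin d) ℂ such that for every i : Fin d, (Uᴴ * M * U) i i = (trace M) / d. -/
/-!
The numerical range `W(A) = {x* A x : x* x = 1}` of a complex matrix is convex
(Toeplitz–Hausdorff) and contains the diagonal entries, hence their mean `c = tr A / d`.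
Taking a unit vector `x` with `x* A x = c` as the last column of a unitary `U`, the matrix `U* A U`
has `c` in the corner and a complementary block of trace `(d - 1) c`, and induction on `d`
finishes.

Convexity reduces, by an affine change `A ↦ a A + b`, to: if `0, 1 ∈ W(A)` then `[0, 1] ⊆ W(A)`.
For unit vectors `x`, `y` with `x* A x = 0` and `y* A y = 1`, the Rayleigh quotient along the
path `(1 - s) x + s e y` is real-valued once the phase `e` is chosen suitably, and the
intermediate value theorem applies.
-/

open Matrix Complex ComplexOrder ComplexConjugate

lemma exists_conj_mul_self_eq_one_im_eq_zero (p r : ℂ) :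
    ∃ e : ℂ, conj e * e = 1 ∧ (e * p + conj e * r).im = 0 := by
  refine ⟨exp (↑(-(p - conj r).arg) * I), ?_, ?_⟩
  · rw [conj_mul', norm_exp_ofReal_mul_I, ofReal_one, one_pow]
  · have : (exp (↑(-(p - conj r).arg) * I) * (p - conj r)).im = 0 := by
      conv_lhs => rw [← norm_mul_exp_arg_mul_I (p - conj r)]
      rw [mul_left_comm, ← exp_add]
      simp
    rw [← this]
    simp only [mul_sub, add_im, sub_im, mul_im, conj_re, conj_im]
    ring

namespace Matrix

section General

variable {n m R : Type*} [Fintype n] [Fintype m]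

lemma trace_fromBlocks [AddCommMonoid R] (A : Matrix n n R) (B : Matrix n m R)
    (C : Matrix m n R) (D : Matrix m m R) : (fromBlocks A B C D).trace = A.trace + D.trace := by
  simp [trace, Fintype.sum_sum_type]

lemma conjTranspose_mul_mul_apply_of_col_eq [NonUnitalSemiring R] [StarRing R]
    {U : Matrix n n R} {x : n → R} {i : n} (hU : ∀ j, U j i = x j) (A : Matrix n n R) :
    (Uᴴ * A * U) i i = star x ⬝ᵥ A *ᵥ x := by
  simp only [mul_apply, conjTranspose_apply, dotProduct, mulVec, Pi.star_apply, hU,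
    Finset.sum_mul, Finset.mul_sum]
  rw [Finset.sum_comm]
  simp only [mul_assoc]

variable [DecidableEq n] [DecidableEq m]

lemma trace_conjTranspose_mul_mul [CommRing R] [StarRing R] {U : Matrix n n R}
    (hU : U ∈ unitaryGroup n R) (A : Matrix n n R) : (Uᴴ * A * U).trace = A.trace := by
  rw [trace_mul_cycle, ← star_eq_conjTranspose, mem_unitaryGroup_iff.mp hU, one_mul]

lemma fromBlocks_mem_unitaryGroup [CommRing R] [StarRing R] {U : Matrix n n R}
    {V : Matrix m m R} (hU : U ∈ unitaryGroup n R) (hV : V ∈ unitaryGroup m R) :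
    fromBlocks U 0 0 V ∈ unitaryGroup (n ⊕ m) R := by
  rw [mem_unitaryGroup_iff', star_eq_conjTranspose, fromBlocks_conjTranspose,
    fromBlocks_multiply]
  simp [← star_eq_conjTranspose, mem_unitaryGroup_iff'.mp hU, mem_unitaryGroup_iff'.mp hV]

lemma exists_mem_unitaryGroup_col_eq {𝕜 : Type*} [RCLike 𝕜] {x : n → 𝕜}
    (hx : star x ⬝ᵥ x = 1) (i : n) : ∃ U ∈ unitaryGroup n 𝕜, ∀ j, U j i = x j := by
  have hv : Orthonormal 𝕜 (({i} : Set n).domRestrict fun _ ↦ WithLp.toLp 2 x) := by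
    rw [orthonormal_iff_ite]
    rintro ⟨_, rfl⟩ ⟨_, rfl⟩
    simp only [Set.domRestrict_apply, if_true, EuclideanSpace.inner_eq_star_dotProduct]
    rw [dotProduct_comm, hx]
  obtain ⟨b, hb⟩ := hv.exists_orthonormalBasis_extension_of_card_eq (by simp)
  refine ⟨(EuclideanSpace.basisFun n 𝕜).toBasis.toMatrix b,
    (EuclideanSpace.basisFun n 𝕜).toMatrix_orthonormalBasis_mem_unitary b, fun j ↦ ?_⟩
  simp [Module.Basis.toMatrix_apply, hb i rfl]

end General

variable {n : Type*} [Fintype n]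

def numericalRange (A : Matrix n n ℂ) : Set ℂ :=
  {w | ∃ x : n → ℂ, star x ⬝ᵥ x = 1 ∧ star x ⬝ᵥ A *ᵥ x = w}

noncomputable def rayleighQuotient (A : Matrix n n ℂ) (v : n → ℂ) : ℂ :=
  (star v ⬝ᵥ A *ᵥ v) / (star v ⬝ᵥ v)

lemma star_smul_dotProduct_smul (a b : ℂ) (x y : n → ℂ) :
    star (a • x) ⬝ᵥ (b • y) = conj a * b * (star x ⬝ᵥ y) := by
  simp only [star_smul, smul_dotProduct, dotProduct_smul, smul_eq_mul, RCLike.star_def]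
  ring

lemma star_smul_dotProduct_mulVec_smul (A : Matrix n n ℂ) (a b : ℂ) (x y : n → ℂ) :
    star (a • x) ⬝ᵥ A *ᵥ (b • y) = conj a * b * (star x ⬝ᵥ A *ᵥ y) := by
  rw [mulVec_smul, star_smul_dotProduct_smul]

lemma star_add_dotProduct_mulVec_add (A : Matrix n n ℂ) (x y : n → ℂ) :
    star (x + y) ⬝ᵥ A *ᵥ (x + y) =
      star x ⬝ᵥ A *ᵥ x + star x ⬝ᵥ A *ᵥ y + star y ⬝ᵥ A *ᵥ x + star y ⬝ᵥ A *ᵥ y := by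
  simp only [star_add, mulVec_add, add_dotProduct, dotProduct_add]
  ring

lemma rayleighQuotient_mem_numericalRange (A : Matrix n n ℂ) {v : n → ℂ} (hv : v ≠ 0) :
    rayleighQuotient A v ∈ numericalRange A := by
  obtain ⟨r, hr, hrv⟩ : ∃ r : ℝ, 0 < r ∧ (r : ℂ) = star v ⬝ᵥ v :=
    RCLike.pos_iff_exists_ofReal.mp (dotProduct_star_self_pos_iff.mpr hv)
  set c : ℂ := (((√r)⁻¹ : ℝ) : ℂ)
  have hc : conj c * c = (star v ⬝ᵥ v)⁻¹ := by
    rw [← hrv, conj_ofReal, ← ofReal_mul, ← sq, inv_pow, Real.sq_sqrt hr.le, ofReal_inv]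
  refine ⟨c • v, ?_, ?_⟩
  · rw [star_smul_dotProduct_smul, hc, inv_mul_cancel₀ (by simpa using hv)]
  · rw [star_smul_dotProduct_mulVec_smul, hc, inv_mul_eq_div, rayleighQuotient]

lemma rayleighQuotient_smul (A : Matrix n n ℂ) {c : ℂ} (hc : c ≠ 0) (v : n → ℂ) :
    rayleighQuotient A (c • v) = rayleighQuotient A v := by
  rw [rayleighQuotient, rayleighQuotient, star_smul_dotProduct_mulVec_smul,
    star_smul_dotProduct_smul, mul_div_mul_left _ _ (by simpa using hc)]

lemma rayleighQuotient_im_eq_zero {A : Matrix n n ℂ} {v : n → ℂ}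
    (hv : (star v ⬝ᵥ A *ᵥ v).im = 0) : (rayleighQuotient A v).im = 0 := by
  have hn : (star v ⬝ᵥ v).im = 0 := (nonneg_iff.mp (dotProduct_star_self_nonneg v)).2.symm
  simp [rayleighQuotient, div_im, hv, hn]

lemma _root_.Continuous.matrix_rayleighQuotient (A : Matrix n n ℂ) {z : ℝ → n → ℂ}
    (hz : Continuous z) (hz0 : ∀ s, z s ≠ 0) : Continuous fun s ↦ rayleighQuotient A (z s) :=
  (hz.star.dotProduct (continuous_const.matrix_mulVec hz)).div (hz.star.dotProduct hz)
    fun s ↦ dotProduct_star_self_eq_zero.not.mpr (hz0 s)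

lemma eq_zero_of_smul_add_smul_eq_zero {A : Matrix n n ℂ} {x y : n → ℂ}
    (hAx : star x ⬝ᵥ A *ᵥ x = 0) (hAy : star y ⬝ᵥ A *ᵥ y = 1) {a b : ℂ}
    (h : a • x + b • y = 0) : b = 0 := by
  have hxy := congrArg (fun v ↦ star v ⬝ᵥ A *ᵥ v) (eq_neg_of_add_eq_zero_left h)
  simp only [← neg_smul, star_smul_dotProduct_mulVec_smul, hAx, hAy, map_neg] at hxy
  have hb : conj b * b = 0 := by linear_combination -hxy
  simpa using hb

lemma ofReal_mem_numericalRange_of_zero_mem_of_one_mem {A : Matrix n n ℂ}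
    (h₀ : 0 ∈ numericalRange A) (h₁ : 1 ∈ numericalRange A) {t : ℝ}
    (ht : t ∈ Set.Icc (0 : ℝ) 1) : (t : ℂ) ∈ numericalRange A := by
  obtain ⟨x, hx, hAx⟩ := h₀
  obtain ⟨y, hy, hAy⟩ := h₁
  -- the phase `e` makes the quadratic form real along the path from `x` to `e • y`
  obtain ⟨e, he, hpr⟩ :=
    exists_conj_mul_self_eq_one_im_eq_zero (star x ⬝ᵥ A *ᵥ y) (star y ⬝ᵥ A *ᵥ x)
  have he0 : e ≠ 0 := right_ne_zero_of_mul_eq_one he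
  set z : ℝ → n → ℂ := fun s ↦ ((1 - s : ℝ) : ℂ) • x + ((s : ℂ) * e) • y
  have hz : ∀ s, z s ≠ 0 := by
    intro s hzs
    obtain rfl : s = 0 := by
      simpa [he0] using eq_zero_of_smul_add_smul_eq_zero hAx hAy hzs
    simp only [z, sub_zero, ofReal_one, one_smul, ofReal_zero, zero_mul, zero_smul,
      add_zero] at hzs
    simp [hzs] at hx
  have hz_real : ∀ s, (star (z s) ⬝ᵥ A *ᵥ z s).im = 0 := by
    intro s
    have hq : star (z s) ⬝ᵥ A *ᵥ z s = ((s * (1 - s) : ℝ) : ℂ) *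
        (e * star x ⬝ᵥ A *ᵥ y + conj e * star y ⬝ᵥ A *ᵥ x) + ((s ^ 2 : ℝ) : ℂ) := by
      simp only [z, star_add_dotProduct_mulVec_add, star_smul_dotProduct_mulVec_smul, hAx, hAy,
        map_mul, conj_ofReal]
      push_cast
      linear_combination (s : ℂ) ^ 2 * he
    rw [hq, add_im, im_ofReal_mul, hpr, ofReal_im, mul_zero, add_zero]
  have hz₀ : (rayleighQuotient A (z 0)).re = 0 := by simp [rayleighQuotient, z, hAx]
  have hz₁ : (rayleighQuotient A (z 1)).re = 1 := by
    have : z 1 = e • y := by simp [z]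
    rw [this, rayleighQuotient_smul A he0, rayleighQuotient, hAy, hy, div_one, one_re]
  obtain ⟨s, -, hs⟩ := intermediate_value_Icc zero_le_one
    (continuous_re.comp ((by fun_prop : Continuous z).matrix_rayleighQuotient A hz)).continuousOn
    (by rwa [Function.comp_apply, Function.comp_apply, hz₀, hz₁])
  rw [← show rayleighQuotient A (z s) = t from
    Complex.ext hs (rayleighQuotient_im_eq_zero (hz_real s))]
  exact rayleighQuotient_mem_numericalRange A (hz s)

lemma mem_numericalRange_smul_add_smul_one [DecidableEq n] {A : Matrix n n ℂ} {w : ℂ}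
    (hw : w ∈ numericalRange A) (a b : ℂ) : a * w + b ∈ numericalRange (a • A + b • 1) := by
  obtain ⟨x, hx, rfl⟩ := hw
  exact ⟨x, hx, by simp [add_mulVec, smul_mulVec, dotProduct_add, hx]⟩

theorem convex_numericalRange (A : Matrix n n ℂ) : Convex ℝ (numericalRange A) := by
  classical
  refine convex_iff_segment_subset.mpr fun α hα β hβ ↦ ?_
  rcases eq_or_ne α β with rfl | hαβ
  · simpa using hα
  rw [segment_eq_image']
  rintro _ ⟨t, ht, rfl⟩
  have hβα : β - α ≠ 0 := sub_ne_zero.mpr hαβ.symm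
  -- `w ↦ (w - α) / (β - α)` sends `α` to `0` and `β` to `1`
  have h₀ := mem_numericalRange_smul_add_smul_one hα (β - α)⁻¹ (-((β - α)⁻¹ * α))
  have h₁ := mem_numericalRange_smul_add_smul_one hβ (β - α)⁻¹ (-((β - α)⁻¹ * α))
  rw [add_neg_cancel] at h₀
  rw [← sub_eq_add_neg, ← mul_sub, inv_mul_cancel₀ hβα] at h₁
  have hA : (β - α) • ((β - α)⁻¹ • A + (-((β - α)⁻¹ * α)) • 1) + α • 1 = A := by
    match_scalars
    · field_simp
    · field_simp
      ring
  have := mem_numericalRange_smul_add_smul_one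
    (ofReal_mem_numericalRange_of_zero_mem_of_one_mem h₀ h₁ ht) (β - α) α
  rw [hA] at this
  convert this using 1
  simp only [real_smul]
  ring

lemma diag_mem_numericalRange [DecidableEq n] (A : Matrix n n ℂ) (i : n) :
    A i i ∈ numericalRange A :=
  ⟨Pi.single i 1, by simp, by simp [mulVec_single]⟩

lemma trace_div_card_mem_numericalRange [Nonempty n] (A : Matrix n n ℂ) :
    A.trace / Fintype.card n ∈ numericalRange A := by
  classical
  have := (convex_numericalRange A).sum_mem (t := Finset.univ)
    (w := fun _ ↦ (Fintype.card n : ℝ)⁻¹) (fun _ _ ↦ by positivity) (by simp)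
    fun i _ ↦ diag_mem_numericalRange A i
  simpa [trace, div_eq_inv_mul, Finset.mul_sum, real_smul] using this

end Matrix

/-- Stated with `trace A = card ι * c` rather than `c = trace A / card ι`, so that no division
(and no junk value at `card ι = 0`) is involved. -/
def UnitarilyFlattenable (ι : Type*) [Fintype ι] [DecidableEq ι] : Prop :=
  ∀ (A : Matrix ι ι ℂ) (c : ℂ), A.trace = Fintype.card ι * c →
    ∃ U ∈ unitaryGroup ι ℂ, ∀ i, (Uᴴ * A * U) i i = c

namespace UnitarilyFlattenable

variable {ι κ : Type*} [Fintype ι] [DecidableEq ι] [Fintype κ] [DecidableEq κ]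

lemma of_isEmpty [IsEmpty ι] : UnitarilyFlattenable ι :=
  fun _ _ _ ↦ ⟨1, one_mem _, isEmptyElim⟩

lemma of_equiv (h : UnitarilyFlattenable ι) (e : ι ≃ κ) : UnitarilyFlattenable κ := by
  intro A c hA
  obtain ⟨U, hU, hdiag⟩ := h (A.submatrix e e) c (by
    rw [trace, Fintype.card_congr e, ← hA, trace]
    exact e.sum_comp fun j ↦ A j j)
  refine ⟨U.submatrix e.symm e.symm, ?_, fun i ↦ ?_⟩
  · rw [mem_unitaryGroup_iff', star_eq_conjTranspose, conjTranspose_submatrix,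
      submatrix_mul_equiv, ← star_eq_conjTranspose, mem_unitaryGroup_iff'.mp hU,
      submatrix_one_equiv]
  · have : (U.submatrix e.symm e.symm)ᴴ * A * U.submatrix e.symm e.symm =
        (Uᴴ * A.submatrix e e * U).submatrix e.symm e.symm := by
      rw [← submatrix_mul_equiv _ _ _ e.symm, ← submatrix_mul_equiv _ _ _ e.symm]
      simp [conjTranspose_submatrix]
    rw [this, submatrix_apply, hdiag]

lemma sum_fin_one (h : UnitarilyFlattenable ι) : UnitarilyFlattenable (ι ⊕ Fin 1) := by
  intro A c hA
  obtain ⟨x, hx, hAx⟩ : c ∈ numericalRange A := by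
    have := trace_div_card_mem_numericalRange A
    rwa [hA, mul_div_cancel_left₀ _ (by positivity)] at this
  obtain ⟨U, hU, hUx⟩ := exists_mem_unitaryGroup_col_eq hx (Sum.inr 0)
  set B := Uᴴ * A * U with hB_def
  have hB : B.toBlocks₂₂ 0 0 = c := (conjTranspose_mul_mul_apply_of_col_eq hUx A).trans hAx
  obtain ⟨V, hV, hVB⟩ := h B.toBlocks₁₁ c (by
    have := trace_conjTranspose_mul_mul hU A
    rw [← hB_def, ← fromBlocks_toBlocks B, trace_fromBlocks, trace_fin_one, hA, hB,
      Fintype.card_sum, Fintype.card_fin, Nat.cast_add, Nat.cast_one] at this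
    linear_combination this)
  refine ⟨U * fromBlocks V 0 0 1, mul_mem hU (fromBlocks_mem_unitaryGroup hV (one_mem _)), ?_⟩
  have : (U * fromBlocks V 0 0 1)ᴴ * A * (U * fromBlocks V 0 0 1) =
      (fromBlocks V 0 0 1)ᴴ * B * fromBlocks V 0 0 1 := by
    simp only [B, conjTranspose_mul, Matrix.mul_assoc]
  rw [this, ← fromBlocks_toBlocks B, fromBlocks_conjTranspose, fromBlocks_multiply,
    fromBlocks_multiply]
  rintro (i | i)
  · simpa using hVB i
  · simpa [Fin.fin_one_eq_zero i] using hB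

end UnitarilyFlattenable

theorem unitarilyFlattenable_fin : ∀ n, UnitarilyFlattenable (Fin n)
  | 0 => .of_isEmpty
  | n + 1 => (unitarilyFlattenable_fin n).sum_fin_one.of_equiv finSumFinEquiv

theorem unitarilyFlattenable (ι : Type*) [Fintype ι] [DecidableEq ι] : UnitarilyFlattenable ι :=
  (unitarilyFlattenable_fin _).of_equiv (Fintype.equivFin ι).symm

/-- Correctness of the general flattening algorithm: every `d × d` complex matrix can be
unitarily conjugated so that every diagonal entry equals `(trace M) / d`. -/
theorem exists_unitary_flattening (d : ℕ) (hd : 1 ≤ d) (M : Matrix (Fin d) (Fin d) ℂ) :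
    ∃ U : Matrix (Fin d) (Fin d) ℂ, U ∈ Matrix.unitaryGroup (Fin d) ℂ ∧
      ∀ i : Fin d, (Uᴴ * M * U) i i = M.trace / (d : ℂ) :=
  unitarilyFlattenable (Fin d) M _ <| by
    rw [Fintype.card_fin, mul_div_cancel₀ _ (Nat.cast_ne_zero.mpr (by omega))]
end

section
/- Let m ≥ 1 and let M ∈ Matrix (Fin m × Fin 2) (Fin m × Fin 2) ℂ. Then there exists a unitary matrix U ∈ Matrix.unitaryGroup (Fin m × Fin 2) ℂ that is block-diagonal with respect to the pairing, i.e., U (a, s) (b, t) = 0 whenever a ≠ b, such that for every a : Fin m, (Uᴴ * M * U) (a, 0) (a, 0) = (Uᴴ * M * U) (a, 1) (a, 1) = (M (a, 0) (a, 0) + M (a, 1) (a, 1)) / 2. -/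
/-!
Each 2 × 2 diagonal block `A` is flattened separately. Conjugation by
`V = !![c, -s w̄; s w, c]` with `c² + s² = 1`, `|w| = 1` moves the `(0, 0)` entry to
`tr A / 2 + ((c² - s²)(A₀₀ - A₁₁) + 2cs(w A₀₁ + w̄ A₁₀)) / 2`. The phase `w` is chosen to make
`w A₀₁ + w̄ A₁₀` a real multiple of `A₀₀ - A₁₁`, after which a suitable angle exists by the
intermediate value theorem. The `(1, 1)` entry then follows from invariance of the trace.
-/

open Matrix ComplexConjugate Real

theorem Complex.exists_norm_eq_one_mul_eq_norm (z : ℂ) : ∃ w : ℂ, ‖w‖ = 1 ∧ w * z = ‖z‖ := by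
  set u := Complex.exp (z.arg * Complex.I)
  have hu : ‖u‖ = 1 := Complex.norm_exp_ofReal_mul_I _
  refine ⟨conj u, by rwa [Complex.norm_conj], ?_⟩
  calc conj u * z = ‖z‖ * (conj u * u) := by
        conv_lhs => rw [← Complex.norm_mul_exp_arg_mul_I z]
        ring
    _ = ‖z‖ := by rw [Complex.conj_mul', hu]; simp

theorem Real.exists_mul_cos_add_mul_sin_eq_zero (a b : ℝ) :
    ∃ φ : ℝ, a * cos φ + b * sin φ = 0 := by
  have hcont : ContinuousOn (fun φ => a * cos φ + b * sin φ) (Set.uIcc 0 π) := by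
    fun_prop
  have hzero : (0 : ℝ) ∈ Set.uIcc a (-a) := by
    rcases le_total a 0 with h | h
    · exact Set.mem_uIcc.2 (Or.inl ⟨h, by linarith⟩)
    · exact Set.mem_uIcc.2 (Or.inr ⟨by linarith, h⟩)
  obtain ⟨φ, -, hφ⟩ := intermediate_value_uIcc hcont (by simpa using hzero)
  exact ⟨φ, hφ⟩

theorem exists_cos_sin_phase_cancel (d p q : ℂ) :
    ∃ c s : ℝ, ∃ w : ℂ, c ^ 2 + s ^ 2 = 1 ∧ ‖w‖ = 1 ∧
      (c ^ 2 - s ^ 2) * d + 2 * c * s * (w * p + conj w * q) = 0 := by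
  by_cases hd : d = 0
  · exact ⟨1, 0, 1, by norm_num, by simp, by simp [hd]⟩
  obtain ⟨w, hw, hwz⟩ := Complex.exists_norm_eq_one_mul_eq_norm (conj d * p - d * conj q)
  set x := w * d * conj q
  set r := ‖conj d * p - d * conj q‖ + 2 * x.re
  have hreal : conj d * (w * p + conj w * q) = r := by
    have hsplit : conj d * (w * p + conj w * q) =
        w * (conj d * p - d * conj q) + (x + conj x) := by
      simp only [x, map_mul, Complex.conj_conj]
      ring
    rw [hsplit, hwz, Complex.add_conj]
    push_cast [r]
    ring
  obtain ⟨φ, hφ⟩ := Real.exists_mul_cos_add_mul_sin_eq_zero (‖d‖ ^ 2) r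
  refine ⟨cos (φ / 2), sin (φ / 2), w, cos_sq_add_sin_sq _, hw, ?_⟩
  have hcos : cos (φ / 2) ^ 2 - sin (φ / 2) ^ 2 = cos φ := by
    rw [← Real.cos_two_mul', mul_div_cancel₀ _ two_ne_zero]
  have hsin : 2 * cos (φ / 2) * sin (φ / 2) = sin φ := by
    rw [mul_right_comm, ← Real.sin_two_mul, mul_div_cancel₀ _ two_ne_zero]
  have hcosC : ((cos (φ / 2) : ℝ) : ℂ) ^ 2 - ((sin (φ / 2) : ℝ) : ℂ) ^ 2 = cos φ := by
    exact_mod_cast hcos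
  have hsinC : 2 * ((cos (φ / 2) : ℝ) : ℂ) * ((sin (φ / 2) : ℝ) : ℂ) = sin φ := by
    exact_mod_cast hsin
  have hφC : (‖d‖ ^ 2 : ℂ) * (cos φ : ℂ) + (r : ℂ) * sin φ = 0 := by exact_mod_cast hφ
  refine mul_left_cancel₀ ((map_ne_zero (starRingEnd ℂ)).2 hd) ?_
  linear_combination (conj d * d) * hcosC + (conj d * (w * p + conj w * q)) * hsinC +
    (sin φ : ℂ) * hreal + (cos φ : ℂ) * Complex.conj_mul' d + hφC

theorem exists_unitary_conj_fin_two_diag_eq_half_trace (A : Matrix (Fin 2) (Fin 2) ℂ) :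
    ∃ V ∈ unitaryGroup (Fin 2) ℂ, ∀ i, (Vᴴ * A * V) i i = A.trace / 2 := by
  obtain ⟨c, s, w, hcs, hw, hcancel⟩ := exists_cos_sin_phase_cancel (A 0 0 - A 1 1) (A 0 1) (A 1 0)
  have hcsC : (c : ℂ) ^ 2 + (s : ℂ) ^ 2 = 1 := by exact_mod_cast hcs
  have hwC : w * conj w = 1 := by rw [Complex.mul_conj', hw]; simp
  set V : Matrix (Fin 2) (Fin 2) ℂ := !![(c : ℂ), -s * conj w; s * w, c]
  have hV : V ∈ unitaryGroup (Fin 2) ℂ := by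
    rw [mem_unitaryGroup_iff']
    ext i j
    fin_cases i <;> fin_cases j <;>
      simp only [V, neg_mul, Fin.zero_eta, Fin.isValue, Fin.mk_one, mul_apply, star_apply, of_apply,
        cons_val', cons_val_zero, cons_val_one, cons_val_fin_one, RCLike.star_def, Fin.sum_univ_two,
        Complex.conj_ofReal, Complex.conj_conj, map_neg, map_mul, mul_neg, neg_neg, one_apply,
        zero_ne_one, one_ne_zero, ↓reduceIte]
    · linear_combination (s : ℂ) ^ 2 * hwC + hcsC
    · ring
    · ring
    · linear_combination (s : ℂ) ^ 2 * hwC + hcsC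
  have h00 : (Vᴴ * A * V) 0 0 = A.trace / 2 := by
    simp only [V, neg_mul, Fin.isValue, mul_apply, conjTranspose_apply, of_apply, cons_val',
      cons_val_zero, cons_val_fin_one, RCLike.star_def, Fin.sum_univ_two, Complex.conj_ofReal,
      cons_val_one, map_mul, trace_fin_two]
    linear_combination hcancel / 2 + (s : ℂ) ^ 2 * A 1 1 * hwC + (A 0 0 + A 1 1) / 2 * hcsC
  have htrace : (Vᴴ * A * V).trace = A.trace := by
    rw [trace_mul_cycle, ← star_eq_conjTranspose, mem_unitaryGroup_iff.mp hV, one_mul]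
  refine ⟨V, hV, Fin.forall_fin_two.2 ⟨h00, ?_⟩⟩
  rw [trace_fin_two] at htrace
  linear_combination htrace - h00

namespace Matrix

variable {l m n p o α : Type*}

theorem blockDiag_blockDiagonal_mul_mul [Fintype m] [Fintype n] [Fintype o] [DecidableEq o]
    [NonUnitalNonAssocSemiring α] (A : o → Matrix l m α) (M : Matrix (m × o) (n × o) α)
    (B : o → Matrix n p α) (k : o) :
    blockDiag (blockDiagonal A * M * blockDiagonal B) k = A k * blockDiag M k * B k := by
  ext i j
  simp [blockDiag_apply, mul_apply, blockDiagonal_apply, Fintype.sum_prod_type, ite_mul, mul_ite]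

theorem blockDiagonal_mem_unitaryGroup [Fintype m] [DecidableEq m] [Fintype o] [DecidableEq o]
    [CommRing α] [StarRing α] {V : o → Matrix m m α} (hV : ∀ k, V k ∈ unitaryGroup m α) :
    blockDiagonal V ∈ unitaryGroup (m × o) α := by
  simp_rw [mem_unitaryGroup_iff', star_eq_conjTranspose] at hV ⊢
  rw [blockDiagonal_conjTranspose, ← blockDiagonal_mul]
  simp only [hV]
  exact blockDiagonal_one

theorem reindex_mem_unitaryGroup [Fintype m] [DecidableEq m] [Fintype n] [DecidableEq n]
    [CommRing α] [StarRing α] (e : m ≃ n) {U : Matrix m m α} (hU : U ∈ unitaryGroup m α) :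
    reindex e e U ∈ unitaryGroup n α := by
  rw [mem_unitaryGroup_iff', star_eq_conjTranspose] at hU ⊢
  rw [conjTranspose_reindex, reindex_apply, reindex_apply, submatrix_mul_equiv, hU,
    submatrix_one_equiv]

theorem conjTranspose_reindex_mul_mul_reindex [Fintype m] [Fintype n] [Semiring α] [StarRing α]
    (e : m ≃ n) (U M : Matrix m m α) :
    (reindex e e U)ᴴ * reindex e e M * reindex e e U = reindex e e (Uᴴ * M * U) := by
  simp only [reindex_apply, conjTranspose_submatrix, submatrix_mul_equiv]

end Matrix

theorem exists_blockDiagonal_unitary_flattening_layer_general (m : ℕ)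
    (M : Matrix (Fin m × Fin 2) (Fin m × Fin 2) ℂ) :
    ∃ U : Matrix (Fin m × Fin 2) (Fin m × Fin 2) ℂ,
      U ∈ Matrix.unitaryGroup (Fin m × Fin 2) ℂ ∧
      (∀ (a b : Fin m) (s t : Fin 2), a ≠ b → U (a, s) (b, t) = 0) ∧
      (∀ a : Fin m,
        (Uᴴ * M * U) (a, 0) (a, 0) = (M (a, 0) (a, 0) + M (a, 1) (a, 1)) / 2 ∧
        (Uᴴ * M * U) (a, 1) (a, 1) = (M (a, 0) (a, 0) + M (a, 1) (a, 1)) / 2) := by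
  -- `blockDiagonal` puts the block index second, so the pairs are reindexed by `prodComm`.
  let e := Equiv.prodComm (Fin 2) (Fin m)
  obtain ⟨M, rfl⟩ := (reindex e e).surjective M
  choose V hV hdiag using fun a => exists_unitary_conj_fin_two_diag_eq_half_trace (blockDiag M a)
  refine ⟨reindex e e (blockDiagonal V),
    reindex_mem_unitaryGroup e (blockDiagonal_mem_unitaryGroup hV),
    fun a b s t hab => blockDiagonal_apply_ne V s t hab, fun a => ?_⟩
  have hblock : ∀ i, blockDiag ((blockDiagonal V)ᴴ * M * blockDiagonal V) a i i =
      (M (0, a) (0, a) + M (1, a) (1, a)) / 2 := by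
    intro i
    rw [blockDiagonal_conjTranspose, blockDiag_blockDiagonal_mul_mul, hdiag, trace_fin_two]
    rfl
  rw [conjTranspose_reindex_mul_mul_reindex]
  exact ⟨hblock 0, hblock 1⟩

/-- Single layer of the iterative flattening algorithm: for a matrix indexed by `m`
pairs, there is a block-diagonal unitary (acting within each pair) whose conjugation
makes the two diagonal entries of each pair both equal to their average. -/
theorem exists_blockDiagonal_unitary_flattening_layer (m : ℕ) (hm : 1 ≤ m)
    (M : Matrix (Fin m × Fin 2) (Fin m × Fin 2) ℂ) :
    ∃ U : Matrix (Fin m × Fin 2) (Fin m × Fin 2) ℂ,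
      U ∈ Matrix.unitaryGroup (Fin m × Fin 2) ℂ ∧
      (∀ (a b : Fin m) (s t : Fin 2), a ≠ b → U (a, s) (b, t) = 0) ∧
      (∀ a : Fin m,
        (Uᴴ * M * U) (a, 0) (a, 0) = (M (a, 0) (a, 0) + M (a, 1) (a, 1)) / 2 ∧
        (Uᴴ * M * U) (a, 1) (a, 1) = (M (a, 0) (a, 0) + M (a, 1) (a, 1)) / 2) :=
  exists_blockDiagonal_unitary_flattening_layer_general m M
end
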